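/- arXiv:1301.6152 — 6 statements merged into one kernel-verified Lean document; each statement's English description precedes it below -/
import Mathlib

section
/- For every uncountable regular cardinal κ, the ordinal κ can be partitioned into κ many pairwise disjoint stationary subsets of κ. -/
open Cardinal Set

/-- `C` is a club (closed unbounded) subset of the ordinal `γ`: it consists of ordinals
below `γ`, its supremum is `γ`, and it is closed under suprema of its nonempty subsets
whose supremum is below `γ`. -/
def IsClubIn (γ : Ordinal) (C : Set Ordinal) : Prop :=
  C ⊆ Set.Iio γ ∧ sSup C = γ ∧
    ∀ s ⊆ C, s.Nonempty → sSup s < γ → sSup s ∈ C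

/-- `S` is stationary in `γ`: it meets every club in `γ`. -/
def IsStatIn (γ : Ordinal) (S : Set Ordinal) : Prop :=
  ∀ C : Set Ordinal, IsClubIn γ C → (S ∩ C).Nonempty

/-!
Every `α < κ` of countable cofinality carries a ladder `L α : ℕ → α` cofinal in `α`. Some
coordinate `n` has the property that for every `β < κ` stationarily many `α` satisfy
`β ≤ L α n`: otherwise clubs `C n` witnessing the failure for bounds `β n` meet in some `α` of
countable cofinality above `sup β n`, and then all `L α n < β n` bound `α` below itself. For that
`n` the pressing down lemma, applied to the regressive map `α ↦ L α n`, produces unboundedly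
many `ξ < κ` whose fibres are stationary. These fibres are disjoint; enumerating `κ` of them and
adding what is left over to the first one gives the partition.
-/

open Ordinal Order

namespace IsClubIn

variable {γ α : Ordinal} {C : Set Ordinal}

theorem exists_gt (hC : IsClubIn γ C) {β : Ordinal} (hβ : β < γ) : ∃ c ∈ C, β < c := by
  by_contra! h
  exact hβ.not_ge (hC.2.1 ▸ csSup_le' h)

theorem mem_of_forall_inter_Ioc_nonempty (hC : IsClubIn γ C) (hαγ : α < γ) (hα : 0 < α)
    (h : ∀ x < α, (C ∩ Ioc x α).Nonempty) : α ∈ C := by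
  have hsup : sSup (C ∩ Iic α) = α := by
    refine le_antisymm (csSup_le' fun z hz => hz.2) (not_lt.1 fun hlt => ?_)
    obtain ⟨z, hzC, hz, hzα⟩ := h _ hlt
    exact hz.not_ge (le_csSup ⟨α, fun z hz => hz.2⟩ ⟨hzC, hzα⟩)
  obtain ⟨z, hzC, -, hzα⟩ := h 0 hα
  have := hC.2.2 (C ∩ Iic α) inter_subset_left ⟨z, hzC, hzα⟩ (by rwa [hsup])
  rwa [hsup] at this

end IsClubIn

theorem isClubIn_Iio {γ : Ordinal} (hγ : IsSuccLimit γ) : IsClubIn γ (Iio γ) :=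
  ⟨subset_rfl, hγ.sSup_Iio, fun _ _ _ h => h⟩

theorem IsStatIn.nonempty {γ : Ordinal} {S : Set Ordinal} (hS : IsStatIn γ S)
    (hγ : IsSuccLimit γ) : S.Nonempty :=
  (hS _ (isClubIn_Iio hγ)).mono inter_subset_left

theorem IsStatIn.mono {γ : Ordinal} {S T : Set Ordinal} (hS : IsStatIn γ S) (hST : S ⊆ T) :
    IsStatIn γ T :=
  fun C hC => (hS C hC).mono (inter_subset_inter_left _ hST)

theorem not_isStatIn_iff {γ : Ordinal} {S : Set Ordinal} :
    ¬ IsStatIn γ S ↔ ∃ C, IsClubIn γ C ∧ Disjoint S C := by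
  simp [IsStatIn, disjoint_iff_inter_eq_empty, not_nonempty_iff_eq_empty]

theorem exists_nat_seq_of_cof_eq_aleph0 :
    ∃ L : Ordinal → ℕ → Ordinal, ∀ α : Ordinal, α.cof = ℵ₀ →
      (∀ n, L α n < α) ∧ ∀ x < α, ∃ n, x ≤ L α n := by
  suffices h : ∀ α : Ordinal, ∃ L : ℕ → Ordinal, α.cof = ℵ₀ →
      (∀ n, L n < α) ∧ ∀ x < α, ∃ n, x ≤ L n by
    choose L hL using h
    exact ⟨L, hL⟩
  intro α
  by_cases hα : α.cof = ℵ₀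
  · obtain ⟨f, hf⟩ := exists_isFundamentalSeq (by rw [hα, ord_aleph0])
    refine ⟨fun n => f ⟨n, natCast_lt_omega0 n⟩, fun _ => ⟨fun n => (f _).2, fun x hx => ?_⟩⟩
    obtain ⟨_, ⟨⟨i, hi⟩, rfl⟩, hxi⟩ := hf.isCofinal_range ⟨x, hx⟩
    obtain ⟨n, rfl⟩ := lt_omega0.1 hi
    exact ⟨n, hxi⟩
  · exact ⟨0, fun h => absurd h hα⟩

section Regular

variable {κ : Cardinal} (hreg : κ.IsRegular) (hunc : ℵ₀ < κ)
include hreg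

theorem iSup_Iio_lt_ord {x : Ordinal} (hx : x < κ.ord) {g : Ordinal → Ordinal}
    (hg : ∀ y < x, g y < κ.ord) : ⨆ y : Iio x, g y < κ.ord := by
  refine lift_iSup_lt_of_lt_cof ?_ fun y => hg y y.2
  rw [Cardinal.mk_Iio_ordinal, Cardinal.lift_lift, ← lift_cof, hreg.cof_ord, Cardinal.lift_lt]
  exact lt_ord.1 hx

theorem exists_injective_mapsTo_of_forall_exists_gt {W : Set Ordinal} (hW : W ⊆ Iio κ.ord)
    (hunb : ∀ β < κ.ord, ∃ ξ ∈ W, β < ξ) :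
    ∃ e : Ordinal → Ordinal, Function.Injective e ∧ MapsTo e (Iio κ.ord) W := by
  have hW' : ¬ BddAbove (W ∪ Ici κ.ord) := not_bddAbove_iff.2 fun b =>
    ⟨max (b + 1) κ.ord, Or.inr (le_max_right (b + 1) κ.ord),
      (lt_add_one b).trans_le (le_max_left _ _)⟩
  have hlt : ∀ γ < κ.ord, enumOrd (W ∪ Ici κ.ord) γ < κ.ord := by
    intro γ
    induction γ using WellFoundedLT.induction with
    | ind γ IH =>
      intro hγ
      obtain ⟨ξ, hξW, hξ⟩ := hunb _ (iSup_Iio_lt_ord hreg hγ fun δ hδ => IH δ hδ (hδ.trans hγ))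
      refine (enumOrd_le_of_forall_lt (Or.inl hξW) fun δ hδ => ?_).trans_lt (hW hξW)
      exact (Ordinal.le_iSup (fun δ : Iio γ => enumOrd (W ∪ Ici κ.ord) δ) ⟨δ, hδ⟩).trans_lt hξ
  refine ⟨_, enumOrd_injective hW', fun γ hγ => ?_⟩
  exact (enumOrd_mem hW' γ).resolve_right (hlt γ hγ).not_ge

include hunc

theorem iSup_nat_lt_ord {f : ℕ → Ordinal} (hf : ∀ n, f n < κ.ord) : ⨆ n, f n < κ.ord := by
  refine lift_iSup_lt_of_lt_cof ?_ hf
  rwa [mk_nat, lift_aleph0, ← lift_cof, hreg.cof_ord, lift_id'.{0} κ]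

theorem exists_gt_cof_eq_aleph0_mapsTo {F : Ordinal → Ordinal}
    (hF : MapsTo F (Iio κ.ord) (Iio κ.ord)) {β : Ordinal} (hβ : β < κ.ord) :
    ∃ α, β < α ∧ α < κ.ord ∧ α.cof = ℵ₀ ∧ MapsTo F (Iio α) (Iio α) := by
  have hκ : IsSuccLimit κ.ord := isSuccLimit_ord hunc.le
  -- `H x` exceeds `x` and every `F y` with `y ≤ x`; `α` is the limit of the iterates of `H`.
  set H : Ordinal → Ordinal := fun x => ⨆ y : Iio (x + 1), (max (F y) y + 1)
  have hH : ∀ x, ∀ y ≤ x, max (F y) y < H x := fun x y hy =>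
    (lt_add_one _).trans_le (Ordinal.le_iSup (fun y : Iio (x + 1) => max (F y) y + 1)
      ⟨y, Order.lt_add_one_iff.2 hy⟩)
  have hHκ : ∀ x < κ.ord, H x < κ.ord := fun x hx =>
    iSup_Iio_lt_ord hreg (hκ.add_one_lt hx) fun y hy =>
      have hyκ : y < κ.ord := hy.trans (hκ.add_one_lt hx)
      hκ.add_one_lt (max_lt (hF hyκ) hyκ)
  have hmono : StrictMono fun n => H^[n] β := strictMono_nat_of_lt_succ fun n => by
    rw [Function.iterate_succ_apply']
    exact (le_max_right _ _).trans_lt (hH _ _ le_rfl)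
  refine ⟨nfp H β, (hmono zero_lt_one).trans_le (iterate_le_nfp H β 1),
    nfp_lt_ord (by rwa [hreg.cof_ord]) hHκ hβ, ?_, fun x hx => ?_⟩
  · rw [← iSup_iterate_eq_nfp]
    simpa using lift_cof_iSup hmono
  · obtain ⟨n, hn⟩ := lt_nfp_iff.1 hx
    calc F x < H (H^[n] β) := (le_max_left _ _).trans_lt (hH _ _ hn.le)
      _ = H^[n + 1] β := (Function.iterate_succ_apply' H n β).symm
      _ ≤ nfp H β := iterate_le_nfp H β _

theorem exists_cof_eq_aleph0_forall_mem {C : ℕ → Set Ordinal}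
    (hC : ∀ n, IsClubIn κ.ord (C n)) {β : Ordinal} (hβ : β < κ.ord) :
    ∃ α, β < α ∧ α < κ.ord ∧ α.cof = ℵ₀ ∧ ∀ n, α ∈ C n := by
  set next : ℕ → Ordinal → Ordinal := fun n x => sInf {c | c ∈ C n ∧ x < c}
  have hnext : ∀ n, ∀ x < κ.ord, next n x ∈ {c | c ∈ C n ∧ x < c} :=
    fun n _ hx => csInf_mem ((hC n).exists_gt hx)
  obtain ⟨α, hβα, hακ, hcof, hclosed⟩ := exists_gt_cof_eq_aleph0_mapsTo hreg hunc
    (F := fun x => ⨆ n, next n x)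
    (fun x hx => iSup_nat_lt_ord hreg hunc fun n => (hC n).1 (hnext n x hx).1) hβ
  refine ⟨α, hβα, hακ, hcof, fun n => (hC n).mem_of_forall_inter_Ioc_nonempty hακ
    (pos_of_gt hβα) fun x hx => ?_⟩
  obtain ⟨hmem, hlt⟩ := hnext n x (hx.trans hακ)
  exact ⟨next n x, hmem, hlt, (Ordinal.le_iSup (fun n => next n x) n).trans (hclosed hx).le⟩

theorem isClubIn_diagInter {C : Ordinal → Set Ordinal} (hC : ∀ ξ, IsClubIn κ.ord (C ξ)) :
    IsClubIn κ.ord {α | α < κ.ord ∧ ∀ ξ < α, α ∈ C ξ} := by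
  have hκ : IsSuccLimit κ.ord := isSuccLimit_ord hunc.le
  have hunb : ∀ β < κ.ord, ∃ α ∈ {α | α < κ.ord ∧ ∀ ξ < α, α ∈ C ξ}, β < α := by
    intro β hβ
    set next : Ordinal → Ordinal → Ordinal := fun ξ x => sInf {c | c ∈ C ξ ∧ x < c}
    have hnext : ∀ ξ, ∀ x < κ.ord, next ξ x ∈ {c | c ∈ C ξ ∧ x < c} :=
      fun ξ _ hx => csInf_mem ((hC ξ).exists_gt hx)
    obtain ⟨α, hβα, hακ, -, hclosed⟩ := exists_gt_cof_eq_aleph0_mapsTo hreg hunc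
      (F := fun x => ⨆ ξ : Iio (x + 1), next ξ x)
      (fun x hx => iSup_Iio_lt_ord hreg (hκ.add_one_lt hx) fun ξ _ => (hC ξ).1 (hnext ξ x hx).1)
      hβ
    refine ⟨α, ⟨hακ, fun ξ hξ => (hC ξ).mem_of_forall_inter_Ioc_nonempty hακ (pos_of_gt hβα)
      fun x hx => ?_⟩, hβα⟩
    obtain ⟨hmem, hlt⟩ := hnext ξ (max x ξ) ((max_lt hx hξ).trans hακ)
    refine ⟨_, hmem, (le_max_left x ξ).trans_lt hlt, ?_⟩
    exact (Ordinal.le_iSup (fun η : Iio (max x ξ + 1) => next η (max x ξ))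
      ⟨ξ, Order.lt_add_one_iff.2 (le_max_right x ξ)⟩).trans (hclosed (max_lt hx hξ)).le
  refine ⟨fun α hα => hα.1, csSup_eq_of_forall_le_of_forall_lt_exists_gt ?_
    (fun α hα => hα.1.le) hunb, fun s hs hne hsκ => ⟨hsκ, fun ξ hξ => ?_⟩⟩
  · obtain ⟨α, hα, -⟩ := hunb 0 hκ.pos
    exact ⟨α, hα⟩
  refine (hC ξ).mem_of_forall_inter_Ioc_nonempty hsκ (pos_of_gt hξ) fun x hx => ?_
  obtain ⟨α, hαs, hα⟩ := exists_lt_of_lt_csSup hne (max_lt hx hξ)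
  exact ⟨α, (hs hαs).2 ξ ((le_max_right x ξ).trans_lt hα), (le_max_left x ξ).trans_lt hα,
    le_csSup ⟨κ.ord, fun a ha => (hs ha).1.le⟩ hαs⟩

theorem IsStatIn.exists_isStatIn_inter_preimage_singleton {S : Set Ordinal}
    (hS : IsStatIn κ.ord S) {g : Ordinal → Ordinal} (hg : ∀ α ∈ S, g α < α) :
    ∃ ξ, IsStatIn κ.ord (S ∩ g ⁻¹' {ξ}) := by
  by_contra! h
  choose C hC hdisj using fun ξ => not_isStatIn_iff.1 (h ξ)
  obtain ⟨α, hαS, -, hαC⟩ := hS _ (isClubIn_diagInter hreg hunc hC)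
  exact disjoint_left.1 (hdisj (g α)) ⟨hαS, rfl⟩ (hαC _ (hg α hαS))

theorem exists_nat_forall_isStatIn_le {L : Ordinal → ℕ → Ordinal}
    (hL : ∀ α : Ordinal, α.cof = ℵ₀ → ∀ x < α, ∃ n, x ≤ L α n) :
    ∃ n, ∀ β < κ.ord, IsStatIn κ.ord {α | (α < κ.ord ∧ α.cof = ℵ₀) ∧ β ≤ L α n} := by
  by_contra! h
  choose β hβ hns using h
  choose C hC hdisj using fun n => not_isStatIn_iff.1 (hns n)
  obtain ⟨α, hβα, hακ, hcof, hαC⟩ :=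
    exists_cof_eq_aleph0_forall_mem hreg hunc hC (iSup_nat_lt_ord hreg hunc hβ)
  obtain ⟨n, hn⟩ := hL α hcof _ hβα
  have hLβ : L α n < β n :=
    not_le.1 fun hle => disjoint_left.1 (hdisj n) ⟨⟨hακ, hcof⟩, hle⟩ (hαC n)
  exact (hn.trans_lt hLβ).not_ge (Ordinal.le_iSup β n)

theorem exists_unbounded_isStatIn_fibers :
    ∃ g : Ordinal → Ordinal, ∀ β < κ.ord,
      ∃ ξ, β < ξ ∧ ξ < κ.ord ∧ IsStatIn κ.ord (Iio κ.ord ∩ g ⁻¹' {ξ}) := by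
  have hκ : IsSuccLimit κ.ord := isSuccLimit_ord hunc.le
  obtain ⟨L, hL⟩ := exists_nat_seq_of_cof_eq_aleph0
  obtain ⟨n, hn⟩ := exists_nat_forall_isStatIn_le hreg hunc fun α hα => (hL α hα).2
  refine ⟨fun α => L α n, fun β hβ => ?_⟩
  obtain ⟨ξ, hξ⟩ := (hn (β + 1) (hκ.add_one_lt hβ)).exists_isStatIn_inter_preimage_singleton
    hreg hunc fun α hα => (hL α hα.1.2).1 n
  obtain ⟨α, ⟨⟨hακ, hcof⟩, hβα⟩, rfl⟩ := hξ.nonempty hκ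
  refine ⟨L α n, Order.add_one_le_iff.1 hβα, ((hL α hcof).1 n).trans hακ, hξ.mono ?_⟩
  rintro x ⟨⟨⟨hxκ, -⟩, -⟩, hx⟩
  exact ⟨hxκ, hx⟩

end Regular

theorem exists_partition_of_pairwiseDisjoint {ι α : Type*} {I : Set ι} {i₀ : ι} (hi₀ : i₀ ∈ I)
    {B : ι → Set α} {U : Set α} (hB : I.PairwiseDisjoint B) (hBU : ∀ i ∈ I, B i ⊆ U) :
    ∃ Z : ι → Set α, (∀ i ∈ I, B i ⊆ Z i) ∧ I.PairwiseDisjoint Z ∧ ⋃ i ∈ I, Z i = U := by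
  classical
  set R := U \ ⋃ i ∈ I, B i
  have hR : ∀ j ∈ I, Disjoint R (B j) := fun j hj =>
    disjoint_sdiff_left.mono_right (subset_biUnion_of_mem hj)
  refine ⟨fun i => if i = i₀ then B i ∪ R else B i, fun i _ => ?_, ?_, ?_⟩
  · dsimp only
    split_ifs
    exacts [subset_union_left, subset_rfl]
  · intro i hi j hj hij
    simp only [Function.onFun]
    split_ifs with hi' hj' hj'
    · exact absurd (hi'.trans hj'.symm) hij
    · exact disjoint_union_left.2 ⟨hB hi hj hij, hR j hj⟩
    · exact disjoint_union_right.2 ⟨hB hi hj hij, (hR i hi).symm⟩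
    · exact hB hi hj hij
  · refine subset_antisymm (iUnion₂_subset fun i hi => ?_) fun x hx => ?_
    · dsimp only
      split_ifs
      exacts [union_subset (hBU i hi) sdiff_subset, hBU i hi]
    · by_cases hxB : x ∈ ⋃ i ∈ I, B i
      · obtain ⟨i, hi, hxi⟩ := mem_iUnion₂.1 hxB
        refine mem_iUnion₂.2 ⟨i, hi, ?_⟩
        dsimp only
        split_ifs
        exacts [Or.inl hxi, hxi]
      · exact mem_iUnion₂.2 ⟨i₀, hi₀, by simpa using Or.inr ⟨hx, hxB⟩⟩

/-- Every uncountable regular cardinal `κ` can be partitioned into `κ` many pairwise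
disjoint stationary subsets of `κ`. -/
theorem stmt0 (κ : Cardinal) (hreg : κ.IsRegular) (hunc : ℵ₀ < κ) :
    ∃ Z : Ordinal → Set Ordinal,
      (∀ γ < κ.ord, IsStatIn κ.ord (Z γ)) ∧
      (∀ γ < κ.ord, ∀ γ' < κ.ord, γ ≠ γ' → Disjoint (Z γ) (Z γ')) ∧
      (⋃ γ ∈ Set.Iio κ.ord, Z γ) = Set.Iio κ.ord := by
  have hκ : IsSuccLimit κ.ord := isSuccLimit_ord hunc.le
  obtain ⟨g, hg⟩ := exists_unbounded_isStatIn_fibers hreg hunc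
  obtain ⟨e, he, heW⟩ := exists_injective_mapsTo_of_forall_exists_gt hreg
    (W := {ξ | ξ < κ.ord ∧ IsStatIn κ.ord (Iio κ.ord ∩ g ⁻¹' {ξ})}) (fun ξ hξ => hξ.1)
    fun β hβ => let ⟨ξ, hβξ, hξ⟩ := hg β hβ; ⟨ξ, hξ, hβξ⟩
  obtain ⟨Z, hBZ, hZ, hZU⟩ := exists_partition_of_pairwiseDisjoint (I := Iio κ.ord)
    (i₀ := 0) (U := Iio κ.ord) hκ.pos (B := fun γ => Iio κ.ord ∩ g ⁻¹' {e γ})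
    (fun γ _ γ' _ hne => ((disjoint_singleton.2 (he.ne hne)).preimage g).mono
      inter_subset_right inter_subset_right)
    fun γ _ => inter_subset_left
  exact ⟨Z, fun γ hγ => (heW hγ).2.mono (hBZ γ hγ), fun γ hγ γ' hγ' hne => hZ hγ hγ' hne, hZU⟩
end

section
/- Let G be the subgroup of (∏_{n=1}^∞ ℤ/2^nℤ) × ℤ[1/2] consisting of all sequences (x_1, x_2, …, x_∞) such that x_n ≡ 2^n · x_∞ (mod 1) holds for all but finitely many n (interpreting ℤ[1/2]/ℤ reductions appropriately). Let g_0 be the element with x_n = 0 for all finite n and x_∞ = 1. Then for every n ≥ 1 there exists h_n ∈ G with 2^n · h_n = g_0. -/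
/-- The carrier of the group `G`: the subgroup of `(∏_{n ≥ 1} ℤ/2ⁿℤ) × ℤ[1/2]` consisting
of those `x = ((x_n)_{n ≥ 1}, x_∞)` such that `x_∞` is a dyadic rational and for all but
finitely many `n`, `2 ^ n * x_∞` is an integer congruent to `x_n` modulo `2 ^ n`.
(The index `n : ℕ` of the product codes the coordinate `n + 1`.) -/
def Gcar : Set ((∀ n : ℕ, ZMod (2 ^ (n + 1))) × ℚ) :=
  {x | (∃ (k : ℤ) (m : ℕ), x.2 = (k : ℚ) / 2 ^ m) ∧
    {n : ℕ | ¬ ∃ z : ℤ, (z : ℚ) = 2 ^ (n + 1) * x.2 ∧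
        x.1 n = (z : ZMod (2 ^ (n + 1)))}.Finite}

/-- The element `g₀ ∈ G`: all finite coordinates are `0` and `x_∞ = 1`. -/
def gZero : (∀ n : ℕ, ZMod (2 ^ (n + 1))) × ℚ := (fun _ => 0, 1)

/-- For every `n ≥ 1` the element `g₀` is divisible by `2 ^ n` in `G`. -/
theorem stmt8 (n : ℕ) (hn : 1 ≤ n) :
    ∃ h ∈ Gcar, (2 ^ n : ℕ) • h = gZero := by
  refine ⟨⟨fun j => ((2 ^ (j + 1 - n) : ℕ) : ZMod (2 ^ (j + 1))), (1 : ℚ) / 2 ^ n⟩,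
    ⟨⟨1, n, by push_cast; ring⟩, ?_⟩, ?_⟩
  · apply Set.Finite.subset (Set.finite_Iio n)
    intro j hj
    simp only [Set.mem_setOf_eq] at hj
    simp only [Set.mem_Iio]
    by_contra h
    push_neg at h
    apply hj
    refine ⟨(2 : ℤ) ^ (j + 1 - n), ?_, ?_⟩
    · have : n + (j + 1 - n) = j + 1 := by omega
      push_cast
      rw [mul_one_div, eq_div_iff (by positivity : (2:ℚ)^n ≠ 0), ← pow_add,
        add_comm, this]
    · push_cast; ring_nf
  · ext j
    · show (2 ^ n : ℕ) • ((2 ^ (j + 1 - n) : ℕ) : ZMod (2 ^ (j + 1))) = 0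
      rw [nsmul_eq_mul, ← Nat.cast_ofNat, ← Nat.cast_pow, ← Nat.cast_mul, ← pow_add,
        ZMod.natCast_eq_zero_iff]
      exact pow_dvd_pow 2 (by omega)
    · show (2 ^ n : ℕ) • ((1 : ℚ) / 2 ^ n) = 1
      rw [nsmul_eq_mul]
      push_cast
      field_simp
end

section
/- In the group G of the previous construction, the element h_1 (given by x_1 = 1 mod 2, x_j = 2^{j-1} mod 2^j for j ≥ 2, x_∞ = 1/2) is not divisible by 2: there is no f ∈ G with 2f = h_1. -/
/-- The element `h₁` of `G`: `x_j = 2 ^ (j - 1)` in `ℤ/2^jℤ` (so the coordinate indexed by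
`n : ℕ`, coding `j = n + 1`, is `2 ^ n`) and `x_∞ = 1/2`. -/
def hOne : (∀ n : ℕ, ZMod (2 ^ (n + 1))) × ℚ :=
  (fun n => (2 ^ n : ZMod (2 ^ (n + 1))), 1 / 2)

/-- `h₁` belongs to `G` but is not divisible by `2` in `G`. -/
theorem stmt9 : hOne ∈ Gcar ∧ ¬ ∃ f ∈ Gcar, (2 : ℕ) • f = hOne := by
  constructor
  · constructor
    · exact ⟨1, 1, by norm_num [hOne]⟩
    · convert Set.finite_empty
      ext n
      simp only [Set.mem_setOf_eq, Set.mem_empty_iff_false, iff_false, not_not]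
      refine ⟨2 ^ n, ?_, ?_⟩
      · push_cast [hOne]; ring
      · simp [hOne]
  · rintro ⟨f, -, hf⟩
    have h0 : ((2 : ℕ) • f).1 0 = hOne.1 0 := by rw [hf]
    have : (2 : ℕ) • f.1 0 = (1 : ZMod 2) := by
      simpa [hOne] using h0
    have h2 : (2 : ℕ) • f.1 0 = 0 := by
      have : ((2 : ℕ) : ZMod (2 ^ (0 + 1))) = 0 := by decide
      rw [nsmul_eq_mul, this, zero_mul]
    rw [h2] at this
    exact absurd this (by decide)
end

section
/- There exist an abelian group G and a nonzero element g_0 ∈ G such that: (1) g_0 is divisible by 2^n for every n (for each n there is h_n with 2^n h_n = g_0), yet (2) some element h_1 with 2 h_1 = g_0 is itself not divisible by 2 in G. -/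
/-- There are an abelian group `G` and a nonzero `g₀ ∈ G` such that `g₀` is divisible by
`2 ^ n` for every `n`, yet some `h₁` with `2 h₁ = g₀` is not divisible by `2` in `G`. -/
theorem stmt10 :
    ∃ (G : Type) (_ : AddCommGroup G) (g₀ : G), g₀ ≠ 0 ∧
      (∀ n : ℕ, ∃ h : G, (2 ^ n : ℕ) • h = g₀) ∧
      (∃ h₁ : G, (2 : ℕ) • h₁ = g₀ ∧ ¬ ∃ f : G, (2 : ℕ) • f = h₁) := by
  refine ⟨ℚ × ZMod 2, inferInstance, (1, 0), ?_, ?_, (1/2, 1), ?_, ?_⟩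
  · simp [Prod.ext_iff]
  · intro n
    refine ⟨(1 / 2 ^ n, 0), ?_⟩
    ext
    · simp [nsmul_eq_mul]
    · simp
  · ext
    · norm_num [nsmul_eq_mul]
    · decide
  · rintro ⟨f, hf⟩
    have h2 : (2 : ℕ) • f.2 = (1 : ZMod 2) := congrArg Prod.snd hf
    have : (2 : ℕ) • f.2 = 0 := by
      have := ZMod.natCast_self 2
      rw [nsmul_eq_mul, this, zero_mul]
    rw [this] at h2
    exact one_ne_zero h2.symm
end

section
/- Let α be an action of a discrete group G on an algebra A via automorphisms, realized inside the crossed product with implementing unitaries u_g satisfying u_g a u_g* = α_g(a), together with a conditional expectation E onto A with E(a u_g) = 0 for g ≠ e and E(a) = a. If A_0 ⊆ A is a closed unital subalgebra invariant under α_g for all g in a subgroup G_0 ⊆ G, and B_0 is the closed subalgebra generated by A_0 and {u_g : g ∈ G_0}, then B_0 ∩ A = A_0. -/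
open scoped ComplexOrder

/-- Crossed-product setting: in a unital C*-algebra `B` (playing the role of the reduced
crossed product `A ⋊_α G`), with implementing unitaries `u g`, a canonical conditional
expectation `E` onto the subalgebra `A`, a unital closed subalgebra `A₀ ⊆ A` invariant
under `α_g = Ad (u g)` for `g` in a subgroup `G₀`, and `B₀` the closed subalgebra
generated by `A₀ ∪ {u g : g ∈ G₀}` (equivalently, the closure of the linear span of
`{a * u g : a ∈ A₀, g ∈ G₀}`), we have `B₀ ∩ A = A₀`. -/
theorem stmt12
    {B : Type*} [NormedRing B] [StarRing B] [CStarRing B] [NormedAlgebra ℂ B]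
    [CompleteSpace B] [StarModule ℂ B]
    {G : Type*} [Group G] (u : G → B)
    (hu_unit : ∀ g, star (u g) * u g = 1 ∧ u g * star (u g) = 1)
    (hu_one : u 1 = 1) (hu_mul : ∀ g h, u (g * h) = u g * u h)
    (hu_inv : ∀ g, u g⁻¹ = star (u g))
    (A : StarSubalgebra ℂ B) (hAclosed : IsClosed (A : Set B))
    (hAinv : ∀ g : G, ∀ a ∈ A, u g * a * star (u g) ∈ A)
    (E : B →L[ℂ] B)
    (hE_mem : ∀ b, E b ∈ A)
    (hE_id : ∀ a ∈ A, E a = a)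
    (hE_u : ∀ a ∈ A, ∀ g : G, g ≠ 1 → E (a * u g) = 0)
    (A₀ : StarSubalgebra ℂ B) (hA₀A : (A₀ : Set B) ⊆ A)
    (hA₀closed : IsClosed (A₀ : Set B))
    (G₀ : Subgroup G)
    (hA₀inv : ∀ g ∈ G₀, ∀ a ∈ A₀, u g * a * star (u g) ∈ A₀)
    (B₀ : Set B)
    (hB₀ : B₀ =
      closure (Submodule.span ℂ {x : B | ∃ a ∈ A₀, ∃ g ∈ G₀, x = a * u g} : Set B)) :
    B₀ ∩ (A : Set B) = (A₀ : Set B) := by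
  subst hB₀
  set S := {x : B | ∃ a ∈ A₀, ∃ g ∈ G₀, x = a * u g} with hS
  ext x
  constructor
  · rintro ⟨hxB, hxA⟩
    have hspan : ∀ z ∈ (Submodule.span ℂ S : Set B), E z ∈ A₀ := by
      intro z hz
      induction hz using Submodule.span_induction with
      | mem w hw =>
        obtain ⟨a, ha, g, hg, rfl⟩ := hw
        by_cases hg1 : g = 1
        · subst hg1
          rw [hu_one, mul_one, hE_id a (hA₀A ha)]
          exact ha
        · rw [hE_u a (hA₀A ha) g hg1]; exact zero_mem _
      | zero => rw [map_zero]; exact zero_mem _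
      | add p q _ _ hp hq => rw [map_add]; exact add_mem hp hq
      | smul c p _ hp => rw [map_smul]; exact SMulMemClass.smul_mem c hp
    have hEx : E x ∈ (A₀ : Set B) := by
      have := map_mem_closure E.continuous hxB (fun z hz => hspan z hz)
      rwa [hA₀closed.closure_eq] at this
    rwa [hE_id x hxA] at hEx
  · intro hx
    refine ⟨?_, hA₀A hx⟩
    apply subset_closure
    apply Submodule.subset_span
    exact ⟨x, hx, 1, one_mem G₀, by rw [hu_one, mul_one]⟩
end

section
/- Let Λ be a σ-complete directed partial order (every countable directed subset has a supremum) and let D ⊆ Λ be cofinal and closed under suprema of countable directed subsets. If Λ is uncountable and upward directed, then for any two such subsets D₁, D₂, the intersection D₁ ∩ D₂ is again cofinal in Λ and closed under countable directed suprema. -/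
/-- In an uncountable σ-complete directed partial order `Λ` (every countable directed
subset has a least upper bound), if `D₁` and `D₂` are cofinal subsets closed under
suprema of countable directed subsets, then `D₁ ∩ D₂` is again cofinal and closed under
suprema of countable directed subsets. -/
theorem stmt18 {Λ : Type*} [PartialOrder Λ] [Uncountable Λ]
    (hdir : ∀ a b : Λ, ∃ c, a ≤ c ∧ b ≤ c)
    (hσ : ∀ Z : Set Λ, Z.Countable → Z.Nonempty → DirectedOn (· ≤ ·) Z →
      ∃ s, IsLUB Z s)
    (D₁ D₂ : Set Λ)
    (hcof₁ : ∀ x : Λ, ∃ d ∈ D₁, x ≤ d)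
    (hcof₂ : ∀ x : Λ, ∃ d ∈ D₂, x ≤ d)
    (hcl₁ : ∀ Z ⊆ D₁, Z.Countable → Z.Nonempty → DirectedOn (· ≤ ·) Z →
      ∀ s, IsLUB Z s → s ∈ D₁)
    (hcl₂ : ∀ Z ⊆ D₂, Z.Countable → Z.Nonempty → DirectedOn (· ≤ ·) Z →
      ∀ s, IsLUB Z s → s ∈ D₂) :
    (∀ x : Λ, ∃ d ∈ D₁ ∩ D₂, x ≤ d) ∧
    (∀ Z ⊆ D₁ ∩ D₂, Z.Countable → Z.Nonempty → DirectedOn (· ≤ ·) Z →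
      ∀ s, IsLUB Z s → s ∈ D₁ ∩ D₂) := by
  constructor
  · intro x
    choose g₁ hg₁ hle₁ using hcof₁
    choose g₂ hg₂ hle₂ using hcof₂
    let c : ℕ → Λ := fun n => Nat.rec (g₁ x) (fun n y => if n % 2 = 0 then g₂ y else g₁ y) n
    have hstep : ∀ n, c n ≤ c (n+1) := by
      intro n
      show c n ≤ (if n % 2 = 0 then g₂ (c n) else g₁ (c n))
      split
      · exact hle₂ _
      · exact hle₁ _
    have hmono : Monotone c := monotone_nat_of_le_succ hstep
    have hmemD₁ : ∀ n, n % 2 = 0 → c n ∈ D₁ := by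
      intro n hn
      cases n with
      | zero => exact hg₁ x
      | succ m =>
        have hm : ¬ (m % 2 = 0) := by omega
        show (if m % 2 = 0 then g₂ (c m) else g₁ (c m)) ∈ D₁
        rw [if_neg hm]; exact hg₁ _
    have hmemD₂ : ∀ n, n % 2 = 1 → c n ∈ D₂ := by
      intro n hn
      cases n with
      | zero => omega
      | succ m =>
        have hm : m % 2 = 0 := by omega
        show (if m % 2 = 0 then g₂ (c m) else g₁ (c m)) ∈ D₂
        rw [if_pos hm]; exact hg₂ _
    have hdirc : DirectedOn (· ≤ ·) (Set.range c) := by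
      rintro _ ⟨m, rfl⟩ _ ⟨n, rfl⟩
      exact ⟨c (max m n), ⟨_, rfl⟩, hmono (le_max_left m n), hmono (le_max_right m n)⟩
    obtain ⟨s, hs⟩ := hσ (Set.range c) (Set.countable_range c) ⟨c 0, 0, rfl⟩ hdirc
    have key : ∀ (r : ℕ → ℕ), (∀ n, n ≤ r n) → IsLUB (Set.range fun k => c (r k)) s := by
      intro r hr
      constructor
      · rintro _ ⟨k, rfl⟩
        exact hs.1 ⟨r k, rfl⟩
      · intro u hu
        refine hs.2 ?_
        rintro _ ⟨n, rfl⟩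
        exact le_trans (hmono (hr n)) (hu ⟨n, rfl⟩)
    have hsD₁ : s ∈ D₁ := by
      refine hcl₁ (Set.range fun k => c (2*k)) ?_ (Set.countable_range _) ⟨c 0, 0, by simp⟩
        ?_ s (key (fun k => 2*k) (fun n => by show n ≤ 2*n; omega))
      · rintro _ ⟨k, rfl⟩; exact hmemD₁ (2*k) (by omega)
      · rintro _ ⟨m, rfl⟩ _ ⟨n, rfl⟩
        exact ⟨_, ⟨max m n, rfl⟩, hmono (show 2*m ≤ 2*max m n by omega),
          hmono (show 2*n ≤ 2*max m n by omega)⟩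
    have hsD₂ : s ∈ D₂ := by
      refine hcl₂ (Set.range fun k => c (2*k+1)) ?_ (Set.countable_range _) ⟨c 1, 0, by simp⟩
        ?_ s (key (fun k => 2*k+1) (fun n => by show n ≤ 2*n+1; omega))
      · rintro _ ⟨k, rfl⟩; exact hmemD₂ (2*k+1) (by omega)
      · rintro _ ⟨m, rfl⟩ _ ⟨n, rfl⟩
        exact ⟨_, ⟨max m n, rfl⟩, hmono (show 2*m+1 ≤ 2*max m n+1 by omega),
          hmono (show 2*n+1 ≤ 2*max m n+1 by omega)⟩
    exact ⟨s, ⟨hsD₁, hsD₂⟩, le_trans (hle₁ x) (hs.1 ⟨0, rfl⟩)⟩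
  · intro Z hZ hc hne hd s hlub
    exact ⟨hcl₁ Z (fun z hz => (hZ hz).1) hc hne hd s hlub,
           hcl₂ Z (fun z hz => (hZ hz).2) hc hne hd s hlub⟩
end
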